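/- arXiv:2409.08004 — 2 statements merged into one kernel-verified Lean document; each statement's English description precedes it below -/
import Mathlib

section
/- Let A be an n×n real matrix, d ∈ ℝ, u > 0, α ∈ ℝ, γ ≠ 0. Let x^(1), …, x^(n) ∈ ℝ^n and b^(1), …, b^(n) ∈ ℝ^n satisfy, for each k and each i, −d·x^(k)_i + u·tanh(α·x^(k)_i + γ·(A x^(k))_i) + b^(k)_i = 0. Define y^(k) ∈ ℝ^n by y^(k)_i = (1/γ)·( artanh((d·x^(k)_i − b^(k)_i)/u) − α·x^(k)_i ), and let X and Y be the n×n matrices whose k-th columns are x^(k) and y^(k) respectively. Then Y = A·X, and if X is invertible then A = Y·X⁻¹. -/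
/-!
At an equilibrium, `tanh (α xᵢ + γ (A x)ᵢ) = (d xᵢ - bᵢ) / u`, so applying `artanh` recovers the
argument of `tanh` and hence `(A x)ᵢ`; the vector `y` built from an input–equilibrium pair is
therefore `A x`. Stacking `n` such pairs as columns gives `Y = A X`.
-/

noncomputable def artanh (x : ℝ) : ℝ := Real.log ((1 + x) / (1 - x)) / 2

lemma artanh_eq_real_artanh {x : ℝ} (hx : x ∈ Set.Icc (-1) 1) : artanh x = Real.artanh x := by
  rw [Real.artanh_eq_half_log hx, artanh]
  ring

lemma artanh_tanh (t : ℝ) : artanh (Real.tanh t) = t := by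
  rw [artanh_eq_real_artanh ⟨(Real.neg_one_lt_tanh t).le, (Real.tanh_lt_one t).le⟩,
    Real.artanh_tanh]

lemma artanh_div_of_equilibrium {d u x b s : ℝ} (hu : u ≠ 0)
    (h : -d * x + u * Real.tanh s + b = 0) : artanh ((d * x - b) / u) = s := by
  have htanh : (d * x - b) / u = Real.tanh s := by
    rw [div_eq_iff hu]
    linarith
  rw [htanh, artanh_tanh]

lemma coupling_eq_of_equilibrium {d u α γ x b s : ℝ} (hu : u ≠ 0) (hγ : γ ≠ 0)
    (h : -d * x + u * Real.tanh (α * x + γ * s) + b = 0) :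
    1 / γ * (artanh ((d * x - b) / u) - α * x) = s := by
  rw [artanh_div_of_equilibrium hu h]
  field_simp
  ring

namespace Matrix

lemma mul_apply_eq_mulVec_transpose {l m n α : Type*} [Fintype m] [NonUnitalNonAssocSemiring α]
    (A : Matrix l m α) (B : Matrix m n α) (i : l) (k : n) : (A * B) i k = (A *ᵥ Bᵀ k) i :=
  rfl

end Matrix

/-- Given `n` input–equilibrium pairs of the nonlinear opinion dynamics, with
`y^(k)_i = (1/γ)(artanh((d x^(k)_i - b^(k)_i)/u) - α x^(k)_i)` and `X`, `Y` the matrices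
with columns `x^(k)`, `y^(k)`, we have `Y = A X`; if `X` is invertible then `A = Y X⁻¹`. -/
theorem stmt7 (n : ℕ) (A : Matrix (Fin n) (Fin n) ℝ) (d α γ u : ℝ)
    (hu : 0 < u) (hγ : γ ≠ 0) (x b y : Fin n → Fin n → ℝ)
    (heq : ∀ k i, -d * x k i + u * Real.tanh (α * x k i + γ * (A.mulVec (x k)) i) + b k i = 0)
    (hy : ∀ k i, y k i = (1 / γ) * (artanh ((d * x k i - b k i) / u) - α * x k i))
    (X Y : Matrix (Fin n) (Fin n) ℝ)
    (hX : ∀ i k, X i k = x k i) (hY : ∀ i k, Y i k = y k i) :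
    Y = A * X ∧ (IsUnit X.det → A = Y * X⁻¹) := by
  have hcol : ∀ k, X.transpose k = x k := fun k => funext fun i => hX i k
  have hYAX : Y = A * X := by
    ext i k
    rw [hY, hy, Matrix.mul_apply_eq_mulVec_transpose, hcol]
    exact coupling_eq_of_equilibrium hu.ne' hγ (heq k i)
  refine ⟨hYAX, fun hdet => ?_⟩
  rw [hYAX, Matrix.mul_nonsing_inv_cancel_right (A := X) A hdet]
end

section
/- Let n = 2m with m ≥ 1, let ℓs, ℓd ∈ [0,1] with ℓs + ℓd > 0, and let B be the n×n expected SSBM matrix with within-community value ℓs and between-community value ℓd. Let χ1 > χ2 > 0 and ε > 0 satisfy (ℓd − ℓs)·(χ1 − χ2) > 2·ε·(ℓs + ℓd), and let v ∈ ℝ^n satisfy |v_i − χ1| ≤ ε for all i ∈ {1,…,m} and |v_j − χ2| ≤ ε for all j ∈ {m+1,…,n}. Then for every i ∈ {1,…,m} and j ∈ {m+1,…,n} one has v_i > v_j and (B·v)_j − (B·v)_i ≥ (n/2)·[(ℓd − ℓs)·(χ1 − χ2) − 2·ε·(ℓs + ℓd)] > 0; consequently, v is not an eigenvector of B for any positive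 eigenvalue. -/
/-!
On a vertex of the first community `B v` equals `ls S₁ + ld S₂`, on one of the second
`ld S₁ + ls S₂`, where `S₁, S₂` are the sums of `v` over the two communities. Hence
`(B v)_j - (B v)_i = (ld - ls)(S₁ - S₂) ≥ m (ld - ls)(χ1 - χ2 - 2ε)`, while `v_i > v_j`:
in the disassortative regime `ld > ls` forced by the gap condition, `B` reverses the order
of `v` across the communities, which no nonnegative multiple of `v` does.
-/

/-- The expected adjacency matrix of a symmetric SBM on `2m` vertices with
within-community value `ls` and between-community value `ld`. -/
def ssbmMatrix (m : ℕ) (ls ld : ℝ) : Matrix (Fin (2 * m)) (Fin (2 * m)) ℝ :=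
  Matrix.of fun i j => if ((i : ℕ) < m ↔ (j : ℕ) < m) then ls else ld

open Finset Matrix

section
variable {m : ℕ}

lemma card_filter_val_lt_half : #{k : Fin (2 * m) | (k : ℕ) < m} = m := by
  rw [Fin.card_filter_val_lt]; omega

lemma card_filter_not_val_lt_half : #{k : Fin (2 * m) | ¬ (k : ℕ) < m} = m := by
  rw [filter_not, card_sdiff_of_subset (filter_subset _ _), card_univ, Fintype.card_fin,
    card_filter_val_lt_half]
  omega

lemma ssbmMatrix_mulVec_sub_mulVec {ls ld : ℝ} (v : Fin (2 * m) → ℝ) {i j : Fin (2 * m)}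
    (hi : (i : ℕ) < m) (hj : m ≤ (j : ℕ)) :
    (ssbmMatrix m ls ld *ᵥ v) j - (ssbmMatrix m ls ld *ᵥ v) i =
      (ld - ls) * (∑ k ∈ {k : Fin (2 * m) | (k : ℕ) < m}, v k -
        ∑ k ∈ {k : Fin (2 * m) | ¬ (k : ℕ) < m}, v k) := by
  have hj' : ¬ (j : ℕ) < m := by omega
  have hentry : ∀ k : Fin (2 * m), ssbmMatrix m ls ld j k - ssbmMatrix m ls ld i k =
      if (k : ℕ) < m then ld - ls else -(ld - ls) := by
    intro k
    by_cases hk : (k : ℕ) < m <;> simp [ssbmMatrix, hi, hj', hk]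
  simp only [mulVec, dotProduct, ← sum_sub_distrib, ← sub_mul, hentry, ite_mul, sum_ite,
    neg_mul, sum_neg_distrib, ← mul_sum]
  ring

lemma sum_sub_sum_ge_of_abs_sub_le {χ1 χ2 ε : ℝ} (v : Fin (2 * m) → ℝ)
    (hv1 : ∀ i : Fin (2 * m), (i : ℕ) < m → |v i - χ1| ≤ ε)
    (hv2 : ∀ j : Fin (2 * m), m ≤ (j : ℕ) → |v j - χ2| ≤ ε) :
    m * (χ1 - χ2 - 2 * ε) ≤
      ∑ k ∈ {k : Fin (2 * m) | (k : ℕ) < m}, v k -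
        ∑ k ∈ {k : Fin (2 * m) | ¬ (k : ℕ) < m}, v k := by
  have hfirst := card_nsmul_le_sum {k : Fin (2 * m) | (k : ℕ) < m} v (χ1 - ε) fun k hk =>
    by linarith [(abs_le.mp (hv1 k (mem_filter.mp hk).2)).1]
  have hsecond := sum_le_card_nsmul {k : Fin (2 * m) | ¬ (k : ℕ) < m} v (χ2 + ε) fun k hk =>
    by linarith [(abs_le.mp (hv2 k (not_lt.mp (mem_filter.mp hk).2))).2]
  rw [card_filter_val_lt_half, nsmul_eq_mul] at hfirst
  rw [card_filter_not_val_lt_half, nsmul_eq_mul] at hsecond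
  linarith
end

lemma Matrix.mulVec_ne_smul_of_lt {n : Type*} [Fintype n] (A : Matrix n n ℝ) {v : n → ℝ}
    {i j : n} (hv : v j < v i) (hAv : (A *ᵥ v) i < (A *ᵥ v) j) {μ : ℝ} (hμ : 0 ≤ μ) :
    A *ᵥ v ≠ μ • v := by
  intro h
  rw [h, Pi.smul_apply, Pi.smul_apply, smul_eq_mul, smul_eq_mul] at hAv
  nlinarith

theorem stmt17_general (m : ℕ) (hm : 1 ≤ m) (ls ld : ℝ)
    (hls : ls ∈ Set.Icc (0:ℝ) 1) (hsum : 0 < ls + ld)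
    (B : Matrix (Fin (2 * m)) (Fin (2 * m)) ℝ) (hB : B = ssbmMatrix m ls ld)
    (χ1 χ2 ε : ℝ) (h21 : χ2 < χ1) (hε : 0 < ε)
    (hgap : 2 * ε * (ls + ld) < (ld - ls) * (χ1 - χ2))
    (v : Fin (2 * m) → ℝ)
    (hv1 : ∀ i : Fin (2 * m), (i : ℕ) < m → |v i - χ1| ≤ ε)
    (hv2 : ∀ j : Fin (2 * m), m ≤ (j : ℕ) → |v j - χ2| ≤ ε) :
    (∀ i j : Fin (2 * m), (i : ℕ) < m → m ≤ (j : ℕ) →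
      v j < v i ∧
      ((2 * m : ℝ) / 2) * ((ld - ls) * (χ1 - χ2) - 2 * ε * (ls + ld)) ≤
        B.mulVec v j - B.mulVec v i) ∧
    0 < ((2 * m : ℝ) / 2) * ((ld - ls) * (χ1 - χ2) - 2 * ε * (ls + ld)) ∧
    (∀ μ : ℝ, 0 < μ → B.mulVec v ≠ μ • v) := by
  subst hB
  have hls_nonneg : 0 ≤ ls := hls.1
  have hls_lt_ld : ls < ld := by
    have : 0 < (ld - ls) * (χ1 - χ2) := lt_trans (by positivity) hgap
    exact sub_pos.mp (pos_of_mul_pos_left this (sub_pos.mpr h21).le)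
  -- `(ld - ls)(χ1 - χ2 - 2ε)` exceeds `4ε ls ≥ 0` by the gap condition
  have hsep : 2 * ε < χ1 - χ2 := by nlinarith
  have hgap_pos : 0 < (2 * m : ℝ) / 2 * ((ld - ls) * (χ1 - χ2) - 2 * ε * (ls + ld)) := by
    have : (0 : ℝ) < m := by exact_mod_cast hm
    have := sub_pos.mpr hgap
    positivity
  have hpair : ∀ i j : Fin (2 * m), (i : ℕ) < m → m ≤ (j : ℕ) →
      v j < v i ∧ (2 * m : ℝ) / 2 * ((ld - ls) * (χ1 - χ2) - 2 * ε * (ls + ld)) ≤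
        (ssbmMatrix m ls ld *ᵥ v) j - (ssbmMatrix m ls ld *ᵥ v) i := by
    intro i j hi hj
    refine ⟨by linarith [abs_le.mp (hv1 i hi), abs_le.mp (hv2 j hj)], ?_⟩
    rw [ssbmMatrix_mulVec_sub_mulVec v hi hj]
    calc (2 * m : ℝ) / 2 * ((ld - ls) * (χ1 - χ2) - 2 * ε * (ls + ld))
        = (ld - ls) * (m * (χ1 - χ2 - 2 * ε)) - 4 * m * ε * ls := by ring
      _ ≤ (ld - ls) * (m * (χ1 - χ2 - 2 * ε)) := sub_le_self _ (by positivity)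
      _ ≤ _ := mul_le_mul_of_nonneg_left (sum_sub_sum_ge_of_abs_sub_le v hv1 hv2)
          (sub_nonneg.mpr hls_lt_ld.le)
  refine ⟨hpair, hgap_pos, fun μ hμ => ?_⟩
  obtain ⟨hv, hBv⟩ := hpair ⟨0, by omega⟩ ⟨m, by omega⟩ hm le_rfl
  exact mulVec_ne_smul_of_lt _ hv (sub_pos.mp (hgap_pos.trans_le hBv)) hμ.le

/-- Deterministic core of the impossibility argument: if `v` is `ε`-close to `χ1` on
community 1 and to `χ2` on community 2, with `χ1 > χ2 > 0` and
`(ld - ls)(χ1 - χ2) > 2ε(ls + ld)`, then `v_i > v_j` while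
`(Bv)_j - (Bv)_i ≥ (n/2)[(ld - ls)(χ1 - χ2) - 2ε(ls + ld)] > 0` for `i` in community 1
and `j` in community 2; hence `v` is not an eigenvector of `B` for any positive
eigenvalue. -/
theorem stmt17 (m : ℕ) (hm : 1 ≤ m) (ls ld : ℝ)
    (hls : ls ∈ Set.Icc (0:ℝ) 1) (hld : ld ∈ Set.Icc (0:ℝ) 1) (hsum : 0 < ls + ld)
    (B : Matrix (Fin (2 * m)) (Fin (2 * m)) ℝ) (hB : B = ssbmMatrix m ls ld)
    (χ1 χ2 ε : ℝ) (h21 : χ2 < χ1) (h2pos : 0 < χ2) (hε : 0 < ε)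
    (hgap : 2 * ε * (ls + ld) < (ld - ls) * (χ1 - χ2))
    (v : Fin (2 * m) → ℝ)
    (hv1 : ∀ i : Fin (2 * m), (i : ℕ) < m → |v i - χ1| ≤ ε)
    (hv2 : ∀ j : Fin (2 * m), m ≤ (j : ℕ) → |v j - χ2| ≤ ε) :
    (∀ i j : Fin (2 * m), (i : ℕ) < m → m ≤ (j : ℕ) →
      v j < v i ∧
      ((2 * m : ℝ) / 2) * ((ld - ls) * (χ1 - χ2) - 2 * ε * (ls + ld)) ≤
        B.mulVec v j - B.mulVec v i) ∧
    0 < ((2 * m : ℝ) / 2) * ((ld - ls) * (χ1 - χ2) - 2 * ε * (ls + ld)) ∧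
    (∀ μ : ℝ, 0 < μ → B.mulVec v ≠ μ • v) :=
  stmt17_general m hm ls ld hls hsum B hB χ1 χ2 ε h21 hε hgap v hv1 hv2
end
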